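/- Let d be a positive integer. Let b : ℝ^d × ℝ^d → ℝ, c : ℝ^d → ℝ, ρ : ℝ^d → ℝ and a : ℝ^d → ℝ be measurable with b(x, z) > 0 for all x, z and ρ ≥ 0, and let s : ℝ^d → ℝ^d be bounded and measurable. Assume that for every x ∈ ℝ^d: (i) a(x) = ∫_{ℝ^d} b(x, z) c(z) dz; (ii) for every z the map x' ↦ b(x', z) is differentiable at x with gradient ∇_x b(x, z); (iii) a is differentiable at x with ∇a(x) = ∫_{ℝ^d} ∇_x b(x, z) c(z) dz. Assume moreover that the function (x, z) ↦ ‖∇_x b(x, z)‖ · |c(z)| · ρ(x) is integrable on ℝ^d × ℝ^d. Then ∫_{ℝ^d} ⟨s(x), ∇a(x)⟩ ρ(x) dx = ∫_{ℝ^d} ∫_{ℝ^d} ⟨s(x), ∇_x log b(x, z)⟩ · ρ(x) · b(x, z) · c(z) dz dx, where ∇_x log b(x, z) = ∇_x b(x, z)/b(x, z). -/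

import Mathlib

/-!
Pairing with `s x` and scaling by `ρ x` commute with the `z`-integral in
`∇a(x) = ∫ c(z) ∇ₓb(x, z) dz` as soon as `z ↦ ρ(x) c(z) ∇ₓb(x, z)` is integrable, which by
Fubini holds for almost every `x`; the measurability this needs comes from writing `∇ₓb(x, ·)`
as a pointwise limit of difference quotients. Pointwise in `z`, `b > 0` turns
`c ∇ₓb` into `∇ₓ log b · b c`.
-/

open MeasureTheory Real Filter Topology
open scoped RealInnerProductSpace

theorem measurable_hasFDerivAt_apply_of_measurable
    {α E F : Type*} [MeasurableSpace α] [NormedAddCommGroup E] [NormedSpace ℝ E]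
    [NormedAddCommGroup F] [NormedSpace ℝ F] [MeasurableSpace F] [BorelSpace F]
    [SecondCountableTopology F]
    {f : E → α → F} {f' : α → E →L[ℝ] F} {x : E}
    (hf : ∀ y, Measurable (f y)) (hf' : ∀ z, HasFDerivAt (f · z) (f' z) x) (v : E) :
    Measurable fun z => f' z v := by
  have hline : ∀ z, HasDerivAt (fun t : ℝ => f (x + t • v) z) (f' z v) 0 := fun z => by
    have hpath : HasDerivAt (fun t : ℝ => x + t • v) v 0 :=
      ((hasDerivAt_id 0).smul_const v).const_add x |>.congr_deriv (one_smul ℝ v)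
    exact (hf' z).comp_hasDerivAt_of_eq 0 hpath (by simp)
  have hseq : Tendsto (fun n : ℕ => (n : ℝ)⁻¹) atTop (𝓝[>] 0) :=
    tendsto_inv_atTop_nhdsGT_zero.comp tendsto_natCast_atTop_atTop
  refine measurable_of_tendsto_metrizable
    (f := fun (n : ℕ) z => (n : ℝ)⁻¹⁻¹ • (f (x + (n : ℝ)⁻¹ • v) z - f x z))
    (fun n => ((hf _).sub (hf x)).const_smul _) (tendsto_pi_nhds.mpr fun z => ?_)
  simpa only [Function.comp_def, zero_add, zero_smul, add_zero] using
    (hline z).tendsto_slope_zero_right.comp hseq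

theorem measurable_hasGradientAt_of_measurable
    {α E : Type*} [MeasurableSpace α] [NormedAddCommGroup E] [InnerProductSpace ℝ E]
    [FiniteDimensional ℝ E] [MeasurableSpace E] [BorelSpace E]
    {f : E → α → ℝ} {G : α → E} {x : E}
    (hf : ∀ y, Measurable (f y)) (hG : ∀ z, HasGradientAt (f · z) (G z) x) :
    Measurable G := by
  set B := stdOrthonormalBasis ℝ E
  have hcoord : ∀ i, Measurable fun z => ⟪B i, G z⟫ := fun i => by
    simpa [real_inner_comm] using measurable_hasFDerivAt_apply_of_measurable hf
      (fun z => (hG z).hasFDerivAt) (B i)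
  have hG_eq : G = fun z => ∑ i, ⟪B i, G z⟫ • B i := funext fun z => (B.sum_repr' (G z)).symm
  rw [hG_eq]
  exact Finset.measurable_sum _ fun i _ => (hcoord i).smul_const _

theorem cross_term_identity_general
    (d : ℕ)
    (b : EuclideanSpace ℝ (Fin d) × EuclideanSpace ℝ (Fin d) → ℝ)
    (c : EuclideanSpace ℝ (Fin d) → ℝ)
    (ρ : EuclideanSpace ℝ (Fin d) → ℝ)
    (a : EuclideanSpace ℝ (Fin d) → ℝ)
    (s : EuclideanSpace ℝ (Fin d) → EuclideanSpace ℝ (Fin d))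
    (Gb : EuclideanSpace ℝ (Fin d) → EuclideanSpace ℝ (Fin d) → EuclideanSpace ℝ (Fin d))
    (hb_meas : Measurable b) (hc_meas : Measurable c)
    (hb_pos : ∀ x z, 0 < b (x, z))
    (hGb : ∀ x z, HasGradientAt (fun x' => b (x', z)) (Gb x z) x)
    (ha : ∀ x, HasGradientAt a (∫ z, c z • Gb x z) x)
    (hInt : Integrable (fun p : EuclideanSpace ℝ (Fin d) × EuclideanSpace ℝ (Fin d) =>
      ‖Gb p.1 p.2‖ * |c p.2| * ρ p.1)) :
    ∫ x, ⟪s x, gradient a x⟫ * ρ x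
      = ∫ x, ∫ z, ⟪s x, (b (x, z))⁻¹ • Gb x z⟫ * (ρ x * (b (x, z) * c z)) := by
  refine integral_congr_ae ?_
  filter_upwards [hInt.prod_right_ae] with x hx
  have hGb_meas : Measurable (Gb x) :=
    measurable_hasGradientAt_of_measurable (fun x' => hb_meas.comp measurable_prodMk_left) (hGb x)
  have hint : Integrable fun z => (ρ x * c z) • Gb x z := by
    refine hx.norm.mono' ((hc_meas.const_mul _).smul hGb_meas).aestronglyMeasurable
      (ae_of_all _ fun z => ?_)
    simp only [norm_smul, norm_mul, Real.norm_eq_abs, abs_norm, abs_abs]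
    exact le_of_eq (by ring)
  calc ⟪s x, gradient a x⟫ * ρ x
      = ⟪s x, ∫ z, (ρ x * c z) • Gb x z⟫ := by
        simp_rw [(ha x).gradient, mul_smul, integral_smul, real_inner_smul_right, mul_comm]
    _ = ∫ z, ⟪s x, (ρ x * c z) • Gb x z⟫ := (integral_inner hint (s x)).symm
    _ = _ := integral_congr_ae <| ae_of_all _ fun z => by
        have hb_ne := (hb_pos x z).ne'
        simp only [real_inner_smul_right]
        field_simp

/-- Cross-term identity: under Chapman–Kolmogorov and differentiation under the integral
sign, `∫ ⟪s x, ∇a x⟫ ρ x dx = ∫ ∫ ⟪s x, ∇ log b (x, z)⟫ ρ x b (x, z) c z dz dx`. -/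
theorem cross_term_identity
    (d : ℕ) (hd : 0 < d)
    (b : EuclideanSpace ℝ (Fin d) × EuclideanSpace ℝ (Fin d) → ℝ)
    (c : EuclideanSpace ℝ (Fin d) → ℝ)
    (ρ : EuclideanSpace ℝ (Fin d) → ℝ)
    (a : EuclideanSpace ℝ (Fin d) → ℝ)
    (s : EuclideanSpace ℝ (Fin d) → EuclideanSpace ℝ (Fin d))
    (Gb : EuclideanSpace ℝ (Fin d) → EuclideanSpace ℝ (Fin d) → EuclideanSpace ℝ (Fin d))
    (hb_meas : Measurable b) (hc_meas : Measurable c) (hρ_meas : Measurable ρ)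
    (ha_meas : Measurable a) (hs_meas : Measurable s)
    (hs_bdd : ∃ C, ∀ x, ‖s x‖ ≤ C)
    (hb_pos : ∀ x z, 0 < b (x, z))
    (hρ_nonneg : ∀ x, 0 ≤ ρ x)
    (hCK : ∀ x, a x = ∫ z, b (x, z) * c z)
    (hGb : ∀ x z, HasGradientAt (fun x' => b (x', z)) (Gb x z) x)
    (ha : ∀ x, HasGradientAt a (∫ z, c z • Gb x z) x)
    (hInt : Integrable (fun p : EuclideanSpace ℝ (Fin d) × EuclideanSpace ℝ (Fin d) =>
      ‖Gb p.1 p.2‖ * |c p.2| * ρ p.1)) :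
    ∫ x, ⟪s x, gradient a x⟫ * ρ x
      = ∫ x, ∫ z, ⟪s x, (b (x, z))⁻¹ • Gb x z⟫ * (ρ x * (b (x, z) * c z)) :=
  cross_term_identity_general d b c ρ a s Gb hb_meas hc_meas hb_pos hGb ha hInt
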